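/- arXiv:2208.09791 — 3 statements merged into one kernel-verified Lean document; each statement's English description precedes it below -/
import Mathlib

section
/- Let d_{mkℓ} ≥ 0 be nonnegative real weights for m,k ∈ {0,…,M−1} and ℓ ∈ {0,…,N−1}, and define P_{mk} := Σ_{ℓ=0}^{N−1} d_{mkℓ} · vec(A_{mkℓ}) vec(A_{mkℓ})^H. Then the largest eigenvalue of the Hermitian matrix Σ_{m,k=0}^{M−1} P_{mk} equals N³ · max_{m,k,ℓ} d_{mkℓ}. -/
open Matrix

/-- The `N × N` unnormalized DFT matrix, `[F]_{m,n} = exp(-2πi·mn/N)`. -/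
noncomputable def dftF (N : ℕ) : Matrix (Fin N) (Fin N) ℂ :=
  Matrix.of fun m n : Fin N =>
    Complex.exp (-(2 * (Real.pi : ℂ) * Complex.I * ((m : ℕ) : ℂ) * ((n : ℕ) : ℂ)) / (N : ℂ))

/-- The `N × MN` selection matrix `S_m = e_mᵀ ⊗ I_N`. -/
def selS (M N : ℕ) (m : Fin M) : Matrix (Fin N) (Fin M × Fin N) ℂ :=
  Matrix.of fun i p => if p.1 = m ∧ p.2 = i then 1 else 0

/-- The matrix `A_{mkℓ} = S_kᴴ diag(N·[F]_ℓ^*) S_m`. -/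
noncomputable def Amat (M N : ℕ) (m k : Fin M) (ℓ : Fin N) :
    Matrix (Fin M × Fin N) (Fin M × Fin N) ℂ :=
  (selS M N k)ᴴ *
    Matrix.diagonal (fun b : Fin N => (N : ℂ) * starRingEnd ℂ (dftF N b ℓ)) * selS M N m

/-- Column-stacking vectorization of a matrix. -/
def vecM {a b : Type*} (X : Matrix a b ℂ) : b × a → ℂ := fun p => X p.2 p.1

/-- `P_{mk} = Σ_ℓ d_{mkℓ} · vec(A_{mkℓ}) vec(A_{mkℓ})ᴴ`. -/
noncomputable def Pmat (M N : ℕ) (d : Fin M → Fin M → Fin N → ℝ) (m k : Fin M) :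
    Matrix ((Fin M × Fin N) × (Fin M × Fin N)) ((Fin M × Fin N) × (Fin M × Fin N)) ℂ :=
  ∑ ℓ : Fin N, (d m k ℓ : ℂ) •
    Matrix.vecMulVec (vecM (Amat M N m k ℓ)) (star (vecM (Amat M N m k ℓ)))

/-!
The vectors `w_{mkℓ} = vec(A_{mkℓ})` are pairwise orthogonal with squared norm `N³`: two of them
with different `(m, k)` have disjoint supports, and for equal `(m, k)` their inner product is `N²`
times the inner product of two DFT columns. Hence `S = Σ d_{mkℓ} w_{mkℓ} w_{mkℓ}ᴴ` satisfies
`S w_{mkℓ} = N³ d_{mkℓ} w_{mkℓ}`, so every `N³ d_{mkℓ}` is an eigenvalue. Conversely, if `S v = μ v`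
with `v ≠ 0`, then either `v` is orthogonal to every `w_{mkℓ}`, so `S v = 0` and `μ = 0 ≤ N³ max d`,
or pairing `S v = μ v` with some `w_{mkℓ}` not orthogonal to `v` gives `μ = N³ d_{mkℓ}`.
-/

namespace Matrix

variable {𝕜 ι n : Type*} [RCLike 𝕜] [Fintype ι] [Fintype n]

lemma IsHermitian.exists_eigenvalues_eq_of_mulVec_eq_smul [DecidableEq n] {A : Matrix n n 𝕜}
    (hA : A.IsHermitian) {v : n → 𝕜} (hv : v ≠ 0) {μ : ℝ} (h : A *ᵥ v = μ • v) :
    ∃ j, hA.eigenvalues j = μ := by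
  have hμ : (μ : 𝕜) ∈ spectrum 𝕜 A := by
    rw [← spectrum_toLin', ← Module.End.hasEigenvalue_iff_mem_spectrum]
    refine Module.End.hasEigenvalue_of_hasEigenvector ⟨Module.End.mem_eigenspace_iff.2 ?_, hv⟩
    rw [toLin'_apply, h, RCLike.real_smul_eq_coe_smul (K := 𝕜)]
  rw [hA.spectrum_eq_image_range] at hμ
  obtain ⟨_, ⟨j, rfl⟩, hj⟩ := hμ
  exact ⟨j, RCLike.ofReal_injective hj⟩

def weightedOuterSum (d : ι → ℝ) (w : ι → n → 𝕜) : Matrix n n 𝕜 :=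
  ∑ i, (d i : 𝕜) • vecMulVec (w i) (star (w i))

lemma weightedOuterSum_mulVec (d : ι → ℝ) (w : ι → n → 𝕜) (v : n → 𝕜) :
    weightedOuterSum d w *ᵥ v = ∑ i, ((d i : 𝕜) * (star (w i) ⬝ᵥ v)) • w i := by
  simp only [weightedOuterSum, sum_mulVec, smul_mulVec, vecMulVec_mulVec, op_smul_eq_smul,
    smul_smul]

section Orthogonal

variable [DecidableEq ι] {w : ι → n → 𝕜} {c : ℝ}
  (hw : ∀ i j, star (w i) ⬝ᵥ w j = if i = j then (c : 𝕜) else 0) (d : ι → ℝ)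
include hw

lemma weightedOuterSum_mulVec_of_orthogonal (j : ι) :
    weightedOuterSum d w *ᵥ w j = (c * d j) • w j := by
  rw [weightedOuterSum_mulVec, Finset.sum_eq_single j (fun i _ hij => by simp [hw, hij])
    (by simp), hw, if_pos rfl, RCLike.real_smul_eq_coe_smul (K := 𝕜), mul_comm]
  push_cast
  ring

lemma star_dotProduct_weightedOuterSum_mulVec_of_orthogonal (j : ι) (v : n → 𝕜) :
    star (w j) ⬝ᵥ weightedOuterSum d w *ᵥ v =
      (c * d j : 𝕜) * (star (w j) ⬝ᵥ v) := by
  rw [weightedOuterSum_mulVec, dotProduct_sum, Finset.sum_eq_single j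
    (fun i _ hij => by simp [hw, Ne.symm hij]) (by simp), dotProduct_smul, hw, if_pos rfl,
    smul_eq_mul]
  ring

lemma eq_zero_or_exists_eq_mul_of_weightedOuterSum_mulVec_eq_smul {v : n → 𝕜} (hv : v ≠ 0)
    {μ : ℝ} (h : weightedOuterSum d w *ᵥ v = μ • v) :
    μ = 0 ∨ ∃ i, μ = c * d i := by
  by_cases hperp : ∀ i, star (w i) ⬝ᵥ v = 0
  · left
    rw [weightedOuterSum_mulVec] at h
    simpa [hperp, hv, eq_comm] using h
  · push Not at hperp
    obtain ⟨i, hi⟩ := hperp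
    have hpair := star_dotProduct_weightedOuterSum_mulVec_of_orthogonal hw d i v
    rw [h, dotProduct_smul, RCLike.real_smul_eq_coe_smul (K := 𝕜), smul_eq_mul] at hpair
    exact Or.inr ⟨i, by exact_mod_cast mul_right_cancel₀ hi hpair⟩

theorem IsHermitian.iSup_eigenvalues_weightedOuterSum_of_orthogonal [Nonempty ι] [DecidableEq n]
    (hc : 0 < c) (hd : ∀ i, 0 ≤ d i) {S : Matrix n n 𝕜} (hS : S.IsHermitian)
    (hSd : S = weightedOuterSum d w) :
    ⨆ j, hS.eigenvalues j = c * ⨆ i, d i := by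
  obtain ⟨i₀, hi₀⟩ := Finite.exists_max d
  have hsup : ⨆ i, d i = d i₀ :=
    le_antisymm (ciSup_le hi₀) (le_ciSup (Finite.bddAbove_range d) i₀)
  rw [hsup]
  subst hSd
  apply le_antisymm
  · refine Real.iSup_le (fun j => ?_) (mul_nonneg hc.le (hd i₀))
    have hv := (WithLp.ofLp_eq_zero 2).ne.2 (hS.eigenvectorBasis.orthonormal.ne_zero j)
    rcases eq_zero_or_exists_eq_mul_of_weightedOuterSum_mulVec_eq_smul hw d hv
      (hS.mulVec_eigenvectorBasis j) with h0 | ⟨i, hi⟩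
    · rw [h0]
      exact mul_nonneg hc.le (hd i₀)
    · rw [hi]
      exact mul_le_mul_of_nonneg_left (hi₀ i) hc.le
  · have hw₀ : w i₀ ≠ 0 := fun h => hc.ne' (by simpa [h] using (hw i₀ i₀).symm)
    obtain ⟨j, hj⟩ := hS.exists_eigenvalues_eq_of_mulVec_eq_smul hw₀
      (weightedOuterSum_mulVec_of_orthogonal hw d i₀)
    exact hj ▸ le_ciSup (Finite.bddAbove_range _) j

end Orthogonal
end Matrix

lemma Amat_apply (M N : ℕ) (m k : Fin M) (ℓ : Fin N) (a b : Fin M × Fin N) :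
    Amat M N m k ℓ a b =
      if a.1 = k ∧ b.1 = m ∧ b.2 = a.2 then (N : ℂ) * starRingEnd ℂ (dftF N a.2 ℓ) else 0 := by
  rw [Amat, mul_apply, Finset.sum_eq_single a.2]
  · simp only [mul_diagonal, selS, conjTranspose_apply, of_apply]
    split_ifs <;> simp_all
  · intro i _ hi
    simp [mul_diagonal, selS, Ne.symm hi]
  · simp

lemma dftF_mul_conj (N : ℕ) (i ℓ ℓ' : Fin N) :
    dftF N i ℓ * starRingEnd ℂ (dftF N i ℓ') =
      (Complex.exp (2 * Real.pi * Complex.I / N) ^ ((ℓ' : ℤ) - ℓ)) ^ (i : ℕ) := by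
  rw [← zpow_natCast, ← _root_.zpow_mul, ← Complex.exp_int_mul, dftF, of_apply, of_apply,
    ← Complex.exp_conj, ← Complex.exp_add]
  congr 1
  simp only [map_div₀, map_neg, map_mul, map_ofNat, Complex.conj_ofReal, Complex.conj_I,
    map_natCast]
  push_cast
  ring

lemma sum_dftF_mul_conj (N : ℕ) (ℓ ℓ' : Fin N) :
    ∑ i, dftF N i ℓ * starRingEnd ℂ (dftF N i ℓ') = if ℓ = ℓ' then (N : ℂ) else 0 := by
  have hζ := Complex.isPrimitiveRoot_exp N ℓ.pos.ne'
  simp_rw [dftF_mul_conj]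
  rw [Fin.sum_univ_eq_sum_range (fun i => (_ ^ ((ℓ' : ℤ) - ℓ)) ^ i) N]
  split_ifs with h
  · simp [h]
  · have hne : Complex.exp (2 * Real.pi * Complex.I / N) ^ ((ℓ' : ℤ) - ℓ) ≠ 1 := by
      rw [Ne, hζ.zpow_eq_one_iff_dvd]
      intro hdvd
      have := Int.eq_zero_of_abs_lt_dvd hdvd (by rw [abs_lt]; omega)
      exact h (Fin.ext (by omega))
    rw [geom_sum_eq hne, ← zpow_natCast, ← _root_.zpow_mul, mul_comm ((ℓ' : ℤ) - ℓ),
      _root_.zpow_mul, zpow_natCast, hζ.pow_eq_one, _root_.one_zpow, sub_self, zero_div]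

lemma star_vecM_Amat_dotProduct (M N : ℕ) (m k m' k' : Fin M) (ℓ ℓ' : Fin N) :
    star (vecM (Amat M N m k ℓ)) ⬝ᵥ vecM (Amat M N m' k' ℓ') =
      if m = m' ∧ k = k' ∧ ℓ = ℓ' then (N : ℂ) ^ 3 else 0 := by
  simp only [dotProduct, vecM, Pi.star_apply, Amat_apply, apply_ite (star : ℂ → ℂ), star_zero,
    ite_zero_mul_ite_zero, Fintype.sum_prod_type]
  by_cases hmk : m = m' ∧ k = k'
  · obtain ⟨rfl, rfl⟩ := hmk
    simp only [and_self, true_and, ite_and, Finset.sum_ite_eq, Finset.sum_ite_eq',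
      Finset.mem_univ, if_true, Finset.sum_ite_irrel, Finset.sum_const_zero]
    have hterm : ∀ i, star ((N : ℂ) * starRingEnd ℂ (dftF N i ℓ)) *
        ((N : ℂ) * starRingEnd ℂ (dftF N i ℓ')) =
          (N : ℂ) ^ 2 * (dftF N i ℓ * starRingEnd ℂ (dftF N i ℓ')) := fun i => by
      simp only [star_mul', RCLike.star_def, Complex.conj_conj, Complex.conj_natCast]
      ring
    simp only [hterm, ← Finset.mul_sum, sum_dftF_mul_conj]
    split_ifs <;> ring
  · rw [if_neg (by tauto)]
    refine Finset.sum_eq_zero fun _ _ => Finset.sum_eq_zero fun _ _ =>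
      Finset.sum_eq_zero fun _ _ => Finset.sum_eq_zero fun _ _ => if_neg ?_
    grind

/-- Theorem 1 of the paper: for nonnegative weights `d_{mkℓ}`,
`λmax(Σ_{m,k} P_{mk}) = N³ · max_{m,k,ℓ} d_{mkℓ}`. -/
theorem stmt9 (M N : ℕ) (hM : 0 < M) (hN : 0 < N)
    (d : Fin M → Fin M → Fin N → ℝ) (hd : ∀ m k ℓ, 0 ≤ d m k ℓ)
    (hS : (∑ m : Fin M, ∑ k : Fin M, Pmat M N d m k).IsHermitian) :
    ⨆ i, hS.eigenvalues i = (N : ℝ) ^ 3 * ⨆ m, ⨆ k, ⨆ ℓ, d m k ℓ := by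
  have : Nonempty (Fin M × Fin M × Fin N) := ⟨(⟨0, hM⟩, ⟨0, hM⟩, ⟨0, hN⟩)⟩
  have hw : ∀ g g' : Fin M × Fin M × Fin N,
      star (vecM (Amat M N g.1 g.2.1 g.2.2)) ⬝ᵥ vecM (Amat M N g'.1 g'.2.1 g'.2.2) =
        if g = g' then (((N : ℝ) ^ 3 : ℝ) : ℂ) else 0 := fun g g' => by
    simp [star_vecM_Amat_dotProduct, Prod.ext_iff]
  have hsum : ∑ m, ∑ k, Pmat M N d m k =
      weightedOuterSum (fun g : Fin M × Fin M × Fin N => d g.1 g.2.1 g.2.2)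
        (fun g => vecM (Amat M N g.1 g.2.1 g.2.2)) := by
    simp only [Pmat, weightedOuterSum, Fintype.sum_prod_type]
    -- `Complex.ofReal` against `RCLike.ofReal`
    rfl
  rw [hS.iSup_eigenvalues_weightedOuterSum_of_orthogonal (c := (N : ℝ) ^ 3) hw _ (by positivity)
    (fun g => hd _ _ _) hsum]
  simp only [Finite.ciSup_prod]
end

section
/- Let d_{mkℓ} ≥ 0 be nonnegative real weights for m,k ∈ {0,…,M−1}, ℓ ∈ {0,…,N−1}, and let x0 ∈ ℂ^{MN} with ‖x0‖ = 1. Set r0_{mkℓ} := x0^H A_{mkℓ} x0, λ̄ := N³ · max_{m,k,ℓ} d_{mkℓ}, and Q1 := Σ_{m,k,ℓ} d_{mkℓ} ( (r0_{mkℓ})^* A_{mkℓ} + r0_{mkℓ} A_{mkℓ}^H ). Then for every x ∈ ℂ^{MN} with ‖x‖ = 1: Σ_{m,k,ℓ} d_{mkℓ} |x^H A_{mkℓ} x|² ≤ x^H Q1 x − 2λ̄ |x^H x0|² + 2λ̄ − Σ_{m,k,ℓ} d_{mkℓ} |r0_{mkℓ}|². -/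
open Matrix

/-!
Write `r = xᴴ A x` and `r0 = x0ᴴ A x0`. The identity `|r|² = 2 Re(r0^* r) - |r0|² + |r - r0|²`
turns the left-hand side into `xᴴ Q1 x - Σ d |r0|² + Σ d |r - r0|²`, so it remains to show
`Σ d |r - r0|² ≤ 2 λ̄ (1 - |xᴴ x0|²)`; as `d ≤ λ̄ / N³`, it suffices that
`Σ |r - r0|² ≤ 2 N³ (1 - |xᴴ x0|²)`.
Since `xᴴ A_{mkℓ} x = N (Fᴴ w_{mk})_ℓ` with `w_{mk}(b) = x_{(k,b)}^* x_{(m,b)}`, Parseval's identity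
`F Fᴴ = N I` gives `Σ_ℓ |r - r0|² = N³ Σ_b |w_{mk}(b) - w0_{mk}(b)|²`. Summed over `m, k`, these
are squares of some of the entries of `x xᴴ - x0 x0ᴴ`, whose squared Frobenius norm is
`2 - 2 |xᴴ x0|²`.
-/

open ComplexConjugate

section QuadraticForm

variable {α m n : Type*} [Fintype α] [Fintype m] [Fintype n]

lemma re_star_dotProduct_self (v : n → ℂ) : (star v ⬝ᵥ v).re = ∑ i, ‖v i‖ ^ 2 := by
  simp [dotProduct, Complex.re_sum, Complex.sq_norm, Complex.normSq_apply]

lemma star_dotProduct_self_conjTranspose_mulVec [DecidableEq m] {B : Matrix m n ℂ} {c : ℂ}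
    (hB : B * Bᴴ = c • 1) (v : m → ℂ) : star (Bᴴ *ᵥ v) ⬝ᵥ Bᴴ *ᵥ v = c * (star v ⬝ᵥ v) := by
  rw [star_mulVec, conjTranspose_conjTranspose, ← dotProduct_mulVec, mulVec_mulVec, hB,
    smul_mulVec, one_mulVec, dotProduct_smul, smul_eq_mul]

lemma star_dotProduct_conjTranspose_mulVec (A : Matrix n n ℂ) (y : n → ℂ) :
    star y ⬝ᵥ Aᴴ *ᵥ y = conj (star y ⬝ᵥ A *ᵥ y) := by
  rw [dotProduct_mulVec, ← star_mulVec, star_dotProduct]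
  rfl

lemma re_star_dotProduct_conj_smul_add_smul_conjTranspose_mulVec (c : ℂ) (A : Matrix n n ℂ)
    (y : n → ℂ) :
    (star y ⬝ᵥ (conj c • A + c • Aᴴ) *ᵥ y).re = 2 * (conj c * (star y ⬝ᵥ A *ᵥ y)).re := by
  rw [add_mulVec, smul_mulVec, smul_mulVec, dotProduct_add, dotProduct_smul, dotProduct_smul,
    star_dotProduct_conjTranspose_mulVec]
  simp only [smul_eq_mul, Complex.add_re, Complex.mul_re, Complex.conj_re, Complex.conj_im]
  ring

lemma sum_sum_norm_sq_conj_mul_sub_conj_mul {x x0 : α → ℂ} (hx : star x ⬝ᵥ x = 1)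
    (hx0 : star x0 ⬝ᵥ x0 = 1) :
    ∑ p, ∑ q, ‖conj (x q) * x p - conj (x0 q) * x0 p‖ ^ 2 = 2 - 2 * ‖star x ⬝ᵥ x0‖ ^ 2 := by
  have hnorm : ∀ v : α → ℂ, star v ⬝ᵥ v = 1 → ∑ p, ‖v p‖ ^ 2 = 1 := fun v hv => by
    rw [← re_star_dotProduct_self, hv, Complex.one_re]
  have hcross : ∑ p, ∑ q, (conj (x q) * x0 q * (x p * conj (x0 p))).re = ‖star x ⬝ᵥ x0‖ ^ 2 := by
    have hs : ∑ p, x p * conj (x0 p) = conj (star x ⬝ᵥ x0) := by simp [dotProduct, mul_comm]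
    rw [Finset.sum_comm]
    simp only [← Complex.re_sum, ← Finset.sum_mul_sum]
    rw [hs]
    change ((star x ⬝ᵥ x0) * conj (star x ⬝ᵥ x0)).re = _
    rw [Complex.mul_conj, Complex.ofReal_re, Complex.sq_norm]
  calc ∑ p, ∑ q, ‖conj (x q) * x p - conj (x0 q) * x0 p‖ ^ 2
      = ∑ p, ∑ q, (‖x p‖ ^ 2 * ‖x q‖ ^ 2 + ‖x0 p‖ ^ 2 * ‖x0 q‖ ^ 2
          - 2 * (conj (x q) * x0 q * (x p * conj (x0 p))).re) := by
        refine Finset.sum_congr rfl fun p _ => Finset.sum_congr rfl fun q _ => ?_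
        simp only [Complex.sq_norm, Complex.normSq_sub, Complex.normSq_conj, map_mul,
          Complex.conj_conj]
        ring_nf
    _ = (∑ p, ‖x p‖ ^ 2) * (∑ q, ‖x q‖ ^ 2) + (∑ p, ‖x0 p‖ ^ 2) * (∑ q, ‖x0 q‖ ^ 2)
          - 2 * ∑ p, ∑ q, (conj (x q) * x0 q * (x p * conj (x0 p))).re := by
        rw [Finset.sum_mul_sum, Finset.sum_mul_sum]
        simp only [Finset.sum_add_distrib, Finset.sum_sub_distrib, Finset.mul_sum]
    _ = 2 - 2 * ‖star x ⬝ᵥ x0‖ ^ 2 := by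
        rw [hnorm x hx, hnorm x0 hx0, hcross]
        ring

end QuadraticForm

section DFT

open Complex

lemma dftF_apply_eq_inv_pow (N : ℕ) (b ℓ : Fin N) :
    dftF N b ℓ = (exp (2 * Real.pi * I / N) ^ ((b : ℕ) * ℓ))⁻¹ := by
  rw [dftF, of_apply, ← exp_nat_mul, ← exp_neg]
  push_cast
  ring_nf

lemma conj_dftF_apply (N : ℕ) (b ℓ : Fin N) :
    conj (dftF N b ℓ) = exp (2 * Real.pi * I / N) ^ ((b : ℕ) * ℓ) := by
  rw [dftF, of_apply, ← exp_conj, ← exp_nat_mul]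
  simp only [map_div₀, map_neg, map_mul, conj_I, conj_ofReal, map_natCast, map_ofNat]
  push_cast
  ring_nf

lemma dftF_mul_conjTranspose (N : ℕ) : dftF N * (dftF N)ᴴ = (N : ℂ) • 1 := by
  ext b b'
  have hζ := isPrimitiveRoot_exp N (Fin.pos b).ne'
  set ζ := exp (2 * Real.pi * I / N)
  have hζ0 : ζ ≠ 0 := exp_ne_zero _
  have hterm : ∀ ℓ : Fin N,
      dftF N b ℓ * conj (dftF N b' ℓ) = (ζ ^ (b' : ℕ) / ζ ^ (b : ℕ)) ^ (ℓ : ℕ) := by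
    intro ℓ
    rw [dftF_apply_eq_inv_pow, conj_dftF_apply, div_pow, ← pow_mul, ← pow_mul]
    ring
  simp only [mul_apply, conjTranspose_apply, RCLike.star_def, hterm, Matrix.smul_apply, one_apply,
    smul_eq_mul]
  rw [Fin.sum_univ_eq_sum_range (fun i => (ζ ^ (b' : ℕ) / ζ ^ (b : ℕ)) ^ i)]
  split_ifs with hbb
  · simp [hbb, hζ0]
  · have hne : ζ ^ (b' : ℕ) / ζ ^ (b : ℕ) ≠ 1 := by
      rw [Ne, div_eq_one_iff_eq (pow_ne_zero _ hζ0)]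
      exact fun h => hbb (Fin.ext (hζ.pow_inj b'.isLt b.isLt h).symm)
    rw [geom_sum_eq hne, div_pow, ← pow_mul, ← pow_mul, mul_comm _ N, mul_comm _ N, pow_mul,
      pow_mul, hζ.pow_eq_one]
    simp

lemma sum_norm_sq_conjTranspose_dftF_mulVec (N : ℕ) (v : Fin N → ℂ) :
    ∑ ℓ, ‖((dftF N)ᴴ *ᵥ v) ℓ‖ ^ 2 = N * ∑ b, ‖v b‖ ^ 2 := by
  rw [← re_star_dotProduct_self, ← re_star_dotProduct_self,
    star_dotProduct_self_conjTranspose_mulVec (dftF_mul_conjTranspose N), ← ofReal_natCast,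
    re_ofReal_mul]

end DFT

lemma selS_mulVec (M N : ℕ) (m : Fin M) (y : Fin M × Fin N → ℂ) :
    selS M N m *ᵥ y = fun b => y (m, b) := by
  ext b
  simp [selS, mulVec, dotProduct, Fintype.sum_prod_type, ite_and]

lemma star_dotProduct_Amat_mulVec (M N : ℕ) (m k : Fin M) (ℓ : Fin N) (y : Fin M × Fin N → ℂ) :
    star y ⬝ᵥ Amat M N m k ℓ *ᵥ y =
      N * ((dftF N)ᴴ *ᵥ fun b => conj (y (k, b)) * y (m, b)) ℓ := by
  rw [Amat, ← mulVec_mulVec, ← mulVec_mulVec, selS_mulVec, dotProduct_mulVec, ← star_mulVec,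
    selS_mulVec]
  simp only [dotProduct, mulVec, diagonal_apply, Pi.star_apply, RCLike.star_def,
    conjTranspose_apply, ite_mul, zero_mul, Finset.sum_ite_eq, Finset.mem_univ,
    if_true, Finset.mul_sum]
  exact Finset.sum_congr rfl fun b _ => by ring

lemma mul_norm_sq_le_of_le {d D : ℝ} (hdD : d ≤ D) (z z0 : ℂ) :
    d * ‖z‖ ^ 2 ≤ d * (2 * (conj z0 * z).re) - d * ‖z0‖ ^ 2 + D * ‖z - z0‖ ^ 2 := by
  have hexpand : ‖z‖ ^ 2 = 2 * (conj z0 * z).re - ‖z0‖ ^ 2 + ‖z - z0‖ ^ 2 := by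
    simp only [Complex.sq_norm, Complex.normSq_apply, Complex.mul_re, Complex.sub_re,
      Complex.sub_im, Complex.conj_re, Complex.conj_im]
    ring
  rw [hexpand]
  nlinarith [mul_le_mul_of_nonneg_right hdD (sq_nonneg ‖z - z0‖)]

section Amat

variable {M N : ℕ} {x x0 : Fin M × Fin N → ℂ}

lemma sum_norm_sq_star_dotProduct_Amat_mulVec_sub (m k : Fin M) :
    ∑ ℓ, ‖star x ⬝ᵥ Amat M N m k ℓ *ᵥ x - star x0 ⬝ᵥ Amat M N m k ℓ *ᵥ x0‖ ^ 2 =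
      N ^ 3 * ∑ b, ‖conj (x (k, b)) * x (m, b) - conj (x0 (k, b)) * x0 (m, b)‖ ^ 2 := by
  have hdiff : ∀ ℓ, star x ⬝ᵥ Amat M N m k ℓ *ᵥ x - star x0 ⬝ᵥ Amat M N m k ℓ *ᵥ x0 =
      N * ((dftF N)ᴴ *ᵥ fun b => conj (x (k, b)) * x (m, b) - conj (x0 (k, b)) * x0 (m, b)) ℓ := by
    intro ℓ
    rw [star_dotProduct_Amat_mulVec, star_dotProduct_Amat_mulVec, ← mul_sub, ← Pi.sub_apply,
      ← mulVec_sub]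
    rfl
  simp only [hdiff, norm_mul, mul_pow, Complex.norm_natCast, ← Finset.mul_sum,
    sum_norm_sq_conjTranspose_dftF_mulVec]
  ring

lemma sum_norm_sq_star_dotProduct_Amat_mulVec_sub_le (hx : star x ⬝ᵥ x = 1)
    (hx0 : star x0 ⬝ᵥ x0 = 1) :
    ∑ m, ∑ k, ∑ ℓ, ‖star x ⬝ᵥ Amat M N m k ℓ *ᵥ x - star x0 ⬝ᵥ Amat M N m k ℓ *ᵥ x0‖ ^ 2 ≤
      N ^ 3 * (2 - 2 * ‖star x ⬝ᵥ x0‖ ^ 2) := by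
  simp only [sum_norm_sq_star_dotProduct_Amat_mulVec_sub, ← Finset.mul_sum]
  gcongr
  rw [← sum_sum_norm_sq_conj_mul_sub_conj_mul hx hx0, Fintype.sum_prod_type]
  gcongr with m
  rw [Finset.sum_comm]
  gcongr with b
  rw [Fintype.sum_prod_type]
  gcongr with k
  exact Finset.single_le_sum
    (f := fun b' => ‖conj (x (k, b')) * x (m, b) - conj (x0 (k, b')) * x0 (m, b)‖ ^ 2)
    (fun _ _ => sq_nonneg _) (Finset.mem_univ b)

end Amat

theorem stmt10_general (M N : ℕ)
    (d : Fin M → Fin M → Fin N → ℝ) (hd : ∀ m k ℓ, 0 ≤ d m k ℓ)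
    (x0 : Fin M × Fin N → ℂ) (hx0 : star x0 ⬝ᵥ x0 = 1)
    (x : Fin M × Fin N → ℂ) (hx : star x ⬝ᵥ x = 1) :
    ∑ m : Fin M, ∑ k : Fin M, ∑ ℓ : Fin N,
        d m k ℓ * ‖star x ⬝ᵥ Amat M N m k ℓ *ᵥ x‖ ^ 2 ≤
      (star x ⬝ᵥ (∑ m : Fin M, ∑ k : Fin M, ∑ ℓ : Fin N, (d m k ℓ : ℂ) •
          (starRingEnd ℂ (star x0 ⬝ᵥ Amat M N m k ℓ *ᵥ x0) • Amat M N m k ℓ +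
            (star x0 ⬝ᵥ Amat M N m k ℓ *ᵥ x0) • (Amat M N m k ℓ)ᴴ)) *ᵥ x).re
        - 2 * ((N : ℝ) ^ 3 * ⨆ m, ⨆ k, ⨆ ℓ, d m k ℓ) * ‖star x ⬝ᵥ x0‖ ^ 2
        + 2 * ((N : ℝ) ^ 3 * ⨆ m, ⨆ k, ⨆ ℓ, d m k ℓ)
        - ∑ m : Fin M, ∑ k : Fin M, ∑ ℓ : Fin N,
            d m k ℓ * ‖star x0 ⬝ᵥ Amat M N m k ℓ *ᵥ x0‖ ^ 2 := by
  set D := ⨆ m, ⨆ k, ⨆ ℓ, d m k ℓ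
  have hD : 0 ≤ D :=
    Real.iSup_nonneg fun m => Real.iSup_nonneg fun k => Real.iSup_nonneg (hd m k)
  have hdD : ∀ m k ℓ, d m k ℓ ≤ D := fun m k ℓ =>
    Finite.le_ciSup_of_le m <| Finite.le_ciSup_of_le k <| Finite.le_ciSup (d m k) ℓ
  simp only [sum_mulVec, dotProduct_sum, Complex.re_sum, smul_mulVec, dotProduct_smul,
    smul_eq_mul, Complex.re_ofReal_mul, re_star_dotProduct_conj_smul_add_smul_conjTranspose_mulVec]
  calc _ ≤ ∑ m, ∑ k, ∑ ℓ, (d m k ℓ * (2 * (conj (star x0 ⬝ᵥ Amat M N m k ℓ *ᵥ x0) *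
            (star x ⬝ᵥ Amat M N m k ℓ *ᵥ x)).re) - d m k ℓ * ‖star x0 ⬝ᵥ Amat M N m k ℓ *ᵥ x0‖ ^ 2
          + D * ‖star x ⬝ᵥ Amat M N m k ℓ *ᵥ x - star x0 ⬝ᵥ Amat M N m k ℓ *ᵥ x0‖ ^ 2) := by
        gcongr with m _ k _ ℓ _
        exact mul_norm_sq_le_of_le (hdD m k ℓ) _ _
    _ ≤ _ := by
        simp only [Finset.sum_add_distrib, Finset.sum_sub_distrib, ← Finset.mul_sum]
        linarith [mul_le_mul_of_nonneg_left
          (sum_norm_sq_star_dotProduct_Amat_mulVec_sub_le hx hx0) hD]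

/-- Corollary 1 of the paper, with the additive constant explicit:
with `r0_{mkℓ} = x0ᴴ A_{mkℓ} x0`, `λ̄ = N³ max d`, and
`Q1 = Σ d ((r0)^* A + r0 Aᴴ)`, for all unit-norm `x`:
`Σ d |xᴴ A x|² ≤ xᴴ Q1 x − 2λ̄ |xᴴ x0|² + 2λ̄ − Σ d |r0|²`. -/
theorem stmt10 (M N : ℕ) (hM : 0 < M) (hN : 0 < N)
    (d : Fin M → Fin M → Fin N → ℝ) (hd : ∀ m k ℓ, 0 ≤ d m k ℓ)
    (x0 : Fin M × Fin N → ℂ) (hx0 : star x0 ⬝ᵥ x0 = 1)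
    (x : Fin M × Fin N → ℂ) (hx : star x ⬝ᵥ x = 1) :
    ∑ m : Fin M, ∑ k : Fin M, ∑ ℓ : Fin N,
        d m k ℓ * ‖star x ⬝ᵥ Amat M N m k ℓ *ᵥ x‖ ^ 2 ≤
      (star x ⬝ᵥ (∑ m : Fin M, ∑ k : Fin M, ∑ ℓ : Fin N, (d m k ℓ : ℂ) •
          (starRingEnd ℂ (star x0 ⬝ᵥ Amat M N m k ℓ *ᵥ x0) • Amat M N m k ℓ +
            (star x0 ⬝ᵥ Amat M N m k ℓ *ᵥ x0) • (Amat M N m k ℓ)ᴴ)) *ᵥ x).re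
        - 2 * ((N : ℝ) ^ 3 * ⨆ m, ⨆ k, ⨆ ℓ, d m k ℓ) * ‖star x ⬝ᵥ x0‖ ^ 2
        + 2 * ((N : ℝ) ^ 3 * ⨆ m, ⨆ k, ⨆ ℓ, d m k ℓ)
        - ∑ m : Fin M, ∑ k : Fin M, ∑ ℓ : Fin N,
            d m k ℓ * ‖star x0 ⬝ᵥ Amat M N m k ℓ *ᵥ x0‖ ^ 2 :=
  stmt10_general M N d hd x0 hx0 x hx
end

section
/- Let A_1,…,A_J be n×n complex matrices, let x0 ∈ ℂ^n be such that r0_j := x0^H A_j x0 is nonzero for every j, and let b_1,…,b_J be nonpositive real numbers. Define the Hermitian matrix Q2 := Σ_{j=1}^J (b_j / (2|r0_j|)) · ( (r0_j)^* A_j + r0_j A_j^H ). Then for every x ∈ ℂ^n: Σ_{j=1}^J b_j |x^H A_j x| ≤ x^H Q2 x. -/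
open Matrix

namespace Matrix

variable {m : Type*} [Fintype m]

lemma star_dotProduct_conjTranspose_mulVec {α : Type*} [CommSemiring α] [StarRing α]
    (A : Matrix m m α) (x : m → α) :
    star x ⬝ᵥ Aᴴ *ᵥ x = star (star x ⬝ᵥ A *ᵥ x) := by
  rw [star_dotProduct, star_mulVec, conjTranspose_conjTranspose, ← dotProduct_mulVec]

variable {𝕜 : Type*} [RCLike 𝕜]

lemma star_dotProduct_conj_smul_add_smul_conjTranspose_mulVec
    (A : Matrix m m 𝕜) (w : 𝕜) (x : m → 𝕜) :
    star x ⬝ᵥ (starRingEnd 𝕜 w • A + w • Aᴴ) *ᵥ x =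
      ((2 * RCLike.re (starRingEnd 𝕜 w * (star x ⬝ᵥ A *ᵥ x)) : ℝ) : 𝕜) := by
  rw [add_mulVec, dotProduct_add, smul_mulVec, smul_mulVec, dotProduct_smul, dotProduct_smul,
    smul_eq_mul, smul_eq_mul, star_dotProduct_conjTranspose_mulVec, RCLike.ofReal_mul,
    RCLike.ofReal_ofNat, ← RCLike.add_conj, map_mul, RCLike.conj_conj]
  rfl

end Matrix

namespace RCLike

variable {𝕜 : Type*} [RCLike 𝕜]

/-- For `w = 0` the right-hand side is `0` by the convention `b / 0 = 0`. -/
lemma mul_norm_le_div_norm_mul_re_conj_mul {b : ℝ} (hb : b ≤ 0) (w z : 𝕜) :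
    b * ‖z‖ ≤ b / ‖w‖ * re (starRingEnd 𝕜 w * z) := by
  have hcancel : b ≤ b / ‖w‖ * ‖w‖ := by
    rcases eq_or_ne ‖w‖ 0 with hw | hw
    · simpa [hw] using hb
    · rw [div_mul_cancel₀ b hw]
  calc b * ‖z‖ ≤ b / ‖w‖ * ‖w‖ * ‖z‖ := mul_le_mul_of_nonneg_right hcancel (norm_nonneg z)
    _ = b / ‖w‖ * ‖starRingEnd 𝕜 w * z‖ := by rw [norm_mul, RCLike.norm_conj, mul_assoc]
    _ ≤ b / ‖w‖ * re (starRingEnd 𝕜 w * z) :=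
        mul_le_mul_of_nonpos_left (re_le_norm _)
          (div_nonpos_of_nonpos_of_nonneg hb (norm_nonneg w))

end RCLike

theorem stmt11_general (n J : ℕ) (A : Fin J → Matrix (Fin n) (Fin n) ℂ)
    (x0 : Fin n → ℂ)
    (b : Fin J → ℝ) (hb : ∀ j, b j ≤ 0)
    (x : Fin n → ℂ) :
    ∑ j : Fin J, b j * ‖star x ⬝ᵥ A j *ᵥ x‖ ≤
      (star x ⬝ᵥ (∑ j : Fin J,
        ((b j / (2 * ‖star x0 ⬝ᵥ A j *ᵥ x0‖) : ℝ) : ℂ) •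
          (starRingEnd ℂ (star x0 ⬝ᵥ A j *ᵥ x0) • A j +
            (star x0 ⬝ᵥ A j *ᵥ x0) • (A j)ᴴ)) *ᵥ x).re := by
  rw [sum_mulVec, dotProduct_sum, Complex.re_sum]
  refine Finset.sum_le_sum fun j _ => ?_
  rw [smul_mulVec, dotProduct_smul, star_dotProduct_conj_smul_add_smul_conjTranspose_mulVec,
    smul_eq_mul, Complex.re_ofReal_mul, ← RCLike.re_to_complex, RCLike.ofReal_re]
  calc b j * ‖star x ⬝ᵥ A j *ᵥ x‖
      ≤ b j / ‖star x0 ⬝ᵥ A j *ᵥ x0‖ *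
          RCLike.re (starRingEnd ℂ (star x0 ⬝ᵥ A j *ᵥ x0) * (star x ⬝ᵥ A j *ᵥ x)) :=
        RCLike.mul_norm_le_div_norm_mul_re_conj_mul (hb j) _ _
    _ = _ := by ring

/-- majorization of the linear term, eq. (20) of the paper:
for matrices `A_j`, a point `x0` with `r0_j = x0ᴴ A_j x0 ≠ 0`, and nonpositive `b_j`,
setting `Q2 = Σ_j (b_j / (2|r0_j|)) ((r0_j)^* A_j + r0_j A_jᴴ)`, one has
`Σ_j b_j |xᴴ A_j x| ≤ xᴴ Q2 x` for every `x`. -/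
theorem stmt11 (n J : ℕ) (A : Fin J → Matrix (Fin n) (Fin n) ℂ)
    (x0 : Fin n → ℂ) (hr0 : ∀ j, star x0 ⬝ᵥ A j *ᵥ x0 ≠ 0)
    (b : Fin J → ℝ) (hb : ∀ j, b j ≤ 0)
    (x : Fin n → ℂ) :
    ∑ j : Fin J, b j * ‖star x ⬝ᵥ A j *ᵥ x‖ ≤
      (star x ⬝ᵥ (∑ j : Fin J,
        ((b j / (2 * ‖star x0 ⬝ᵥ A j *ᵥ x0‖) : ℝ) : ℂ) •
          (starRingEnd ℂ (star x0 ⬝ᵥ A j *ᵥ x0) • A j +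
            (star x0 ⬝ᵥ A j *ᵥ x0) • (A j)ᴴ)) *ᵥ x).re :=
  stmt11_general n J A x0 b hb x
end
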